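/- arXiv:2006.04086 — 2 statements merged into one kernel-verified Lean document; each statement's English description precedes it below -/
import Mathlib

section
/- The state |ψ⟩ = (1/(2√2))(|00000⟩+|01111⟩+|10011⟩+|11100⟩+|20101⟩+|21010⟩+|30110⟩+|31001⟩) in C^4⊗C^2⊗C^2⊗C^2⊗C^2 is 2-uniform: for every pair of the five parties, the reduced density matrix is maximally mixed. -/
open Finset

/-- Entry `(a|_S, b|_S)` of the reduced density matrix of the pure state with
computational-basis coefficients `ψ`, obtained by tracing out the parties
outside `S`. -/
noncomputable def reducedEntry {ι : Type} [Fintype ι] [DecidableEq ι]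
    (d : ι → ℕ) (ψ : (∀ i, Fin (d i)) → ℂ) (S : Finset ι)
    (a b : ∀ i, Fin (d i)) : ℂ :=
  ∑ c : ∀ i : {i // i ∉ S}, Fin (d i.1),
    ψ (fun i => if h : i ∈ S then a i else c ⟨i, h⟩) *
      (starRingEnd ℂ) (ψ (fun i => if h : i ∈ S then b i else c ⟨i, h⟩))

/-- `ψ` is `k`-uniform: every reduction to `k` parties is maximally mixed. -/
def IsKUniform {ι : Type} [Fintype ι] [DecidableEq ι]
    (d : ι → ℕ) (k : ℕ) (ψ : (∀ i, Fin (d i)) → ℂ) : Prop :=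
  ∀ S : Finset ι, S.card = k → ∀ a b : ∀ i, Fin (d i),
    reducedEntry d ψ S a b =
      if ∀ i ∈ S, a i = b i then 1 / (∏ i ∈ S, (d i : ℂ)) else 0

/-- Local dimensions of `C⁴ ⊗ C² ⊗ C² ⊗ C² ⊗ C²`. -/
def dims5 : Fin 5 → ℕ := fun i => if i = 0 then 4 else 2

/-- The eight rows supporting the state. -/
def rows42222 : List (ℕ × ℕ × ℕ × ℕ × ℕ) :=
  [(0,0,0,0,0), (0,1,1,1,1), (1,0,0,1,1), (1,1,1,0,0),
   (2,0,1,0,1), (2,1,0,1,0), (3,0,1,1,0), (3,1,0,0,1)]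

/-- The state `|ψ⟩ = (1/(2√2))(|00000⟩ + |01111⟩ + |10011⟩ + |11100⟩ + |20101⟩ +
|21010⟩ + |30110⟩ + |31001⟩)`. -/
noncomputable def psi42222 : (∀ i, Fin (dims5 i)) → ℂ :=
  fun x =>
    if ((x 0 : ℕ), (x 1 : ℕ), (x 2 : ℕ), (x 3 : ℕ), (x 4 : ℕ)) ∈ rows42222
    then ((1 / (2 * Real.sqrt 2) : ℝ) : ℂ) else 0

/-!
The support `C` of `ψ` is an orthogonal array of strength 2 whose rows are pairwise at Hamming
distance at least 3, and `ψ` is constant on `C`. An entry `(a, b)` of the reduction to a pair `S`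
counts the completions `t` outside `S` for which both `(a, t)` and `(b, t)` are rows of `C`. If
`a ≠ b` on `S` these two rows would be at distance at most 2, so there are none; if `a = b` on `S`
they are the rows through `a|_S`, of which the orthogonal array has exactly `|C| / ∏_{i ∈ S} d_i`.
-/

section OrthogonalArray

variable {ι : Type} [DecidableEq ι] {d : ι → ℕ}

def glue (S : Finset ι) (a : ∀ i, Fin (d i)) (t : ∀ i : {i // i ∉ S}, Fin (d i.1)) :
    ∀ i, Fin (d i) :=
  fun i => if h : i ∈ S then a i else t ⟨i, h⟩

theorem glue_restrict {S : Finset ι} {a x : ∀ i, Fin (d i)} (hx : ∀ i ∈ S, x i = a i) :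
    glue S a (fun i => x i.1) = x := by
  funext i
  by_cases hi : i ∈ S
  · simp [glue, hi, hx i hi]
  · simp [glue, hi]

theorem glue_ne_glue {S : Finset ι} {a b : ∀ i, Fin (d i)} (hab : ¬ ∀ i ∈ S, a i = b i)
    (t : ∀ i : {i // i ∉ S}, Fin (d i.1)) : glue S a t ≠ glue S b t := by
  push Not at hab
  obtain ⟨i, hi, hne⟩ := hab
  intro h
  simpa [glue, hi, hne] using congrFun h i

variable [Fintype ι]

def IsOrthogonalArray (d : ι → ℕ) (k : ℕ) (C : Finset (∀ i, Fin (d i))) : Prop :=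
  ∀ S : Finset ι, S.card = k → ∀ a : ∀ i, Fin (d i),
    #{x ∈ C | ∀ i ∈ S, x i = a i} * ∏ i ∈ S, d i = #C

theorem hammingDist_glue_le (S : Finset ι) (a b : ∀ i, Fin (d i))
    (t : ∀ i : {i // i ∉ S}, Fin (d i.1)) : hammingDist (glue S a t) (glue S b t) ≤ #S := by
  refine card_le_card fun i hi => ?_
  by_contra hiS
  exact (mem_filter.1 hi).2 (by simp [glue, hiS])

theorem card_glue_mem (C : Finset (∀ i, Fin (d i))) (S : Finset ι) (a : ∀ i, Fin (d i)) :
    #{t | glue S a t ∈ C} = #{x ∈ C | ∀ i ∈ S, x i = a i} := by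
  refine card_bij' (fun t _ => glue S a t) (fun x _ i => x i.1) ?_ ?_ ?_ ?_
  · intro t ht
    simp only [mem_filter, mem_univ, true_and] at ht ⊢
    exact ⟨ht, fun i hi => dif_pos hi⟩
  · intro x hx
    simp only [mem_filter, mem_univ, true_and] at hx ⊢
    rw [glue_restrict hx.2]
    exact hx.1
  · intro t _
    funext i
    exact dif_neg i.2
  · intro x hx
    exact glue_restrict (mem_filter.1 hx).2

theorem sum_norm_sq_indicator (C : Finset (∀ i, Fin (d i))) (c : ℝ) :
    ∑ x, ‖if x ∈ C then (c : ℂ) else 0‖ ^ 2 = c ^ 2 * #C := by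
  simp [apply_ite, sum_ite_mem, mul_comm]

theorem reducedEntry_indicator (C : Finset (∀ i, Fin (d i))) (c : ℝ) (S : Finset ι)
    (a b : ∀ i, Fin (d i)) :
    reducedEntry d (fun x => if x ∈ C then (c : ℂ) else 0) S a b =
      c ^ 2 * #{t | glue S a t ∈ C ∧ glue S b t ∈ C} := by
  rw [reducedEntry, card_filter, Nat.cast_sum, mul_sum]
  refine sum_congr rfl fun t _ => ?_
  change (if glue S a t ∈ C then (c : ℂ) else 0) *
    starRingEnd ℂ (if glue S b t ∈ C then (c : ℂ) else 0) = _
  split_ifs <;> simp_all [sq]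

theorem isKUniform_of_isOrthogonalArray {k : ℕ} {C : Finset (∀ i, Fin (d i))}
    (hC : IsOrthogonalArray d k C) (hdist : ∀ x ∈ C, ∀ y ∈ C, x ≠ y → k < hammingDist x y)
    {c : ℝ} (hc : c ^ 2 * #C = 1) :
    IsKUniform d k (fun x => if x ∈ C then (c : ℂ) else 0) := by
  intro S hS a b
  rw [reducedEntry_indicator]
  split_ifs with hab
  · have hglue : ∀ t, glue S b t = glue S a t := fun t => by
      funext i; by_cases hi : i ∈ S <;> simp [glue, hi, hab]
    simp only [hglue, and_self, card_glue_mem]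
    have hcount := hC S hS a
    have hnorm : (c : ℂ) ^ 2 * #C = 1 := by exact_mod_cast hc
    rw [← hcount, Nat.cast_mul, Nat.cast_prod] at hnorm
    have hprod : ∏ i ∈ S, (d i : ℂ) ≠ 0 :=
      right_ne_zero_of_mul (right_ne_zero_of_mul_eq_one hnorm)
    rw [eq_div_iff hprod, ← hnorm, mul_assoc]
  · have hempty : #{t | glue S a t ∈ C ∧ glue S b t ∈ C} = 0 := by
      refine card_eq_zero.2 (filter_false_of_mem fun t _ ⟨ha, hb⟩ => ?_)
      exact (hdist _ ha _ hb (glue_ne_glue hab t)).not_ge (hS ▸ hammingDist_glue_le S a b t)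
    simp [hempty]

end OrthogonalArray

def code42222 : Finset (∀ i, Fin (dims5 i)) :=
  {x | ((x 0 : ℕ), (x 1 : ℕ), (x 2 : ℕ), (x 3 : ℕ), (x 4 : ℕ)) ∈ rows42222}

theorem card_code42222 : #code42222 = 8 := by decide

theorem isOrthogonalArray_code42222 : IsOrthogonalArray dims5 2 code42222 := by
  unfold IsOrthogonalArray; decide

set_option maxRecDepth 100000 in
theorem lt_hammingDist_code42222 :
    ∀ x ∈ code42222, ∀ y ∈ code42222, x ≠ y → 2 < hammingDist x y := by decide

/-- The state `psi42222` is a normalized `2`-uniform state in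
`C⁴ ⊗ C² ⊗ C² ⊗ C² ⊗ C²`. -/
theorem psi42222_two_uniform :
    (∑ x, ‖psi42222 x‖ ^ 2 = 1) ∧ IsKUniform dims5 2 psi42222 := by
  have hψ : psi42222 =
      fun x => if x ∈ code42222 then ((1 / (2 * Real.sqrt 2) : ℝ) : ℂ) else 0 := by
    funext x
    simp [psi42222, code42222]
  have hc : (1 / (2 * Real.sqrt 2)) ^ 2 * #code42222 = 1 := by
    rw [card_code42222, div_pow, mul_pow, Real.sq_sqrt zero_le_two]
    norm_num
  rw [hψ]
  exact ⟨(sum_norm_sq_indicator _ _).trans hc,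
    isKUniform_of_isOrthogonalArray isOrthogonalArray_code42222 lt_hammingDist_code42222 hc⟩
end

section
/- If there exists an absolutely maximally entangled state in (C^d)^{⊗N} with N even, then there exists an absolutely maximally entangled state in C^{d²}⊗(C^d)^{⊗(N−2)} (a system of N−1 parties). -/
/-! Merging two parties only relabels the computational basis, blockwise: the reduction of the
merged state to a set `S` of parties is the reduction of the original state to the preimage of
`S`, which has at most `|S| + 1 ≤ N/2` parties. An `N/2`-uniform state is also uniform on fewer
parties, since tracing one party out of a maximally mixed reduction leaves a maximally mixed one. -/

open Finset

/-- Dimensions of the merged system `C^{d²} ⊗ (C^d)^{⊗(N-2)}`. -/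
def dimsAME (d N : ℕ) : Option (Fin (N - 2)) → ℕ :=
  fun o => o.elim (d ^ 2) (fun _ => d)

section ReducedEntry

variable {ι : Type} [Fintype ι] [DecidableEq ι] {d : ι → ℕ}

theorem reducedEntry_eq_sum_filter (ψ : (∀ i, Fin (d i)) → ℂ) (S : Finset ι)
    (a b : ∀ i, Fin (d i)) :
    reducedEntry d ψ S a b =
      ∑ x with ∀ i ∈ S, x i = a i, ψ x * starRingEnd ℂ (ψ (S.piecewise b x)) := by
  refine sum_nbij' (fun c i => if h : i ∈ S then a i else c ⟨i, h⟩)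
    (fun x i => x i.1) ?_ ?_ ?_ ?_ ?_
  · intro c _
    simp +contextual
  · simp
  · intro c _
    funext i
    simp [i.2]
  · intro x hx
    funext i
    by_cases hi : i ∈ S <;> simp_all
  · intro c _
    congr 3
    funext i
    by_cases hi : i ∈ S <;> simp [hi]

theorem reducedEntry_eq_sum_insert (ψ : (∀ i, Fin (d i)) → ℂ) {S : Finset ι} {i : ι}
    (hi : i ∉ S) (a b : ∀ i, Fin (d i)) :
    reducedEntry d ψ S a b =
      ∑ t : Fin (d i),
        reducedEntry d ψ (insert i S) (Function.update a i t) (Function.update b i t) := by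
  simp only [reducedEntry_eq_sum_filter]
  rw [← sum_fiberwise _ (fun x : ∀ j, Fin (d j) => x i)]
  simp only [filter_filter]
  refine sum_congr rfl fun t _ => sum_congr ?_ fun x hx => ?_
  · ext x
    simp only [mem_filter, mem_univ, true_and, forall_mem_insert,
      Function.update_self]
    rw [and_comm]
    refine and_congr_right fun _ => forall₂_congr fun j hj => ?_
    rw [Function.update_of_ne (ne_of_mem_of_not_mem hj hi)]
  · have hxi : x i = t := by simp_all
    congr 3
    funext j
    by_cases hj : j = i
    · subst hj
      simp [hi, hxi]
    · simp [piecewise, hj]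

theorem IsKUniform.of_succ (hd : ∀ i, 0 < d i) {k : ℕ} {ψ : (∀ i, Fin (d i)) → ℂ}
    (hψ : IsKUniform d (k + 1) ψ) (hk : k < Fintype.card ι) : IsKUniform d k ψ := by
  intro S hS a b
  obtain ⟨i, -, hi⟩ := exists_mem_notMem_of_card_lt_card (s := S) (t := univ)
    (by rwa [card_univ, hS])
  have hcond : ∀ t : Fin (d i),
      (∀ j ∈ insert i S, Function.update a i t j = Function.update b i t j) ↔
        ∀ j ∈ S, a j = b j := fun t => by
    simp +contextual [Function.update_of_ne (ne_of_mem_of_not_mem _ hi)]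
  have hcard : (insert i S).card = k + 1 := by rw [card_insert_of_notMem hi, hS]
  simp only [reducedEntry_eq_sum_insert ψ hi, hψ (insert i S) hcard, if_congr (hcond _) rfl rfl,
    prod_insert hi]
  split_ifs
  · have : (d i : ℂ) ≠ 0 := by exact_mod_cast (hd i).ne'
    simp only [sum_const, card_univ, Fintype.card_fin, nsmul_eq_mul]
    field_simp
  · simp

theorem IsKUniform.mono (hd : ∀ i, 0 < d i) {k k' : ℕ} {ψ : (∀ i, Fin (d i)) → ℂ}
    (hψ : IsKUniform d k ψ) (hk' : k' ≤ k) (hk : k ≤ Fintype.card ι) : IsKUniform d k' ψ := by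
  induction k, hk' using Nat.le_induction with
  | base => exact hψ
  | succ k _ ih => exact ih (hψ.of_succ hd hk) (k.le_succ.trans hk)

end ReducedEntry

section Blocks

variable {ι κ : Type} {d : ι → ℕ} {D : κ → ℕ} (p : ι → κ)

def blockConfigEquiv (e : ∀ o, Fin (D o) ≃ ∀ j : {j // p j = o}, Fin (d j)) :
    (∀ o, Fin (D o)) ≃ ∀ j, Fin (d j) where
  toFun x j := e (p j) (x (p j)) ⟨j, rfl⟩
  invFun y o := (e o).symm fun j => y j.1
  left_inv x := by
    funext o
    rw [Equiv.symm_apply_eq]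
    funext ⟨j, hj⟩
    subst hj
    rfl
  right_inv y := by
    funext j
    simp

variable [Fintype ι] [DecidableEq κ] {p} (e : ∀ o, Fin (D o) ≃ ∀ j : {j // p j = o}, Fin (d j))

theorem blockConfigEquiv_eqOn_iff (S : Finset κ) (x y : ∀ o, Fin (D o)) :
    (∀ j ∈ univ.filter fun j => p j ∈ S,
        blockConfigEquiv p e x j = blockConfigEquiv p e y j) ↔
      ∀ o ∈ S, x o = y o := by
  simp only [mem_filter, mem_univ, true_and]
  refine ⟨fun h o ho => (e o).injective (funext fun ⟨j, hj⟩ => ?_), fun h j hj => ?_⟩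
  · subst hj
    exact h j ho
  · simp only [blockConfigEquiv, Equiv.coe_fn_mk, h (p j) hj]

theorem blockConfigEquiv_piecewise [DecidableEq ι] (S : Finset κ) (x y : ∀ o, Fin (D o)) :
    blockConfigEquiv p e (S.piecewise x y) =
      (univ.filter fun j => p j ∈ S).piecewise
        (blockConfigEquiv p e x) (blockConfigEquiv p e y) := by
  funext j
  by_cases hj : p j ∈ S <;> simp [blockConfigEquiv, piecewise, hj]

theorem reducedEntry_comp_blockConfigEquiv [DecidableEq ι] [Fintype κ]
    (ψ : (∀ j, Fin (d j)) → ℂ) (S : Finset κ) (a b : ∀ o, Fin (D o)) :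
    reducedEntry D (ψ ∘ blockConfigEquiv p e) S a b =
      reducedEntry d ψ (univ.filter fun j => p j ∈ S)
        (blockConfigEquiv p e a) (blockConfigEquiv p e b) := by
  rw [reducedEntry_eq_sum_filter, reducedEntry_eq_sum_filter]
  refine sum_equiv (blockConfigEquiv p e) (fun x => ?_) fun x _ => ?_
  · rw [mem_filter_univ, mem_filter_univ, blockConfigEquiv_eqOn_iff]
  · rw [Function.comp_apply, Function.comp_apply, blockConfigEquiv_piecewise]

@[to_additive]
theorem prod_filter_mem_eq_prod_prod {M : Type} [CommMonoid M] (f : ι → M) (S : Finset κ) :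
    ∏ j ∈ univ.filter (fun j => p j ∈ S), f j = ∏ o ∈ S, ∏ j : {j // p j = o}, f j := by
  rw [← prod_fiberwise_of_maps_to (t := S) (g := p) (by simp)]
  refine prod_congr rfl fun o ho => ?_
  rw [filter_filter]
  refine prod_subtype _ (fun j => ?_) _
  rw [mem_filter_univ]
  exact ⟨And.right, fun hj => ⟨hj ▸ ho, hj⟩⟩

theorem card_filter_mem_eq_sum_card (S : Finset κ) :
    (univ.filter fun j => p j ∈ S).card = ∑ o ∈ S, Fintype.card {j // p j = o} := by
  rw [card_eq_sum_ones, sum_filter_mem_eq_sum_sum]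
  simp

theorem IsKUniform.comp_blockConfigEquiv [DecidableEq ι] [Fintype κ] (hd : ∀ j, 0 < d j)
    {k k' : ℕ} {ψ : (∀ j, Fin (d j)) → ℂ} (hψ : IsKUniform d k ψ) (hk : k ≤ Fintype.card ι)
    (hcard : ∀ S : Finset κ, S.card = k' → (univ.filter fun j => p j ∈ S).card ≤ k) :
    IsKUniform D k' (ψ ∘ blockConfigEquiv p e) := by
  intro S hS a b
  have hD : ∀ o, D o = ∏ j : {j // p j = o}, d j := fun o => by
    simpa using Fintype.card_congr (e o)
  rw [reducedEntry_comp_blockConfigEquiv, hψ.mono hd (hcard S hS) hk _ rfl]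
  refine if_congr (blockConfigEquiv_eqOn_iff e S a b) ?_ rfl
  push_cast [prod_filter_mem_eq_prod_prod, hD]
  rfl

theorem exists_isKUniform_of_fibers [DecidableEq ι] [Fintype κ]
    (hD : ∀ o, D o = ∏ j : {j // p j = o}, d j) (hd : ∀ j, 0 < d j) {k k' : ℕ}
    (hk : k ≤ Fintype.card ι)
    (hcard : ∀ S : Finset κ, S.card = k' → (univ.filter fun j => p j ∈ S).card ≤ k)
    {ψ : (∀ j, Fin (d j)) → ℂ} (hψ₁ : ∑ x, ‖ψ x‖ ^ 2 = 1) (hψ : IsKUniform d k ψ) :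
    ∃ φ : (∀ o, Fin (D o)) → ℂ, (∑ x, ‖φ x‖ ^ 2 = 1) ∧ IsKUniform D k' φ := by
  let e o : Fin (D o) ≃ ∀ j : {j // p j = o}, Fin (d j) := Fintype.equivOfCardEq (by simp [hD])
  refine ⟨ψ ∘ blockConfigEquiv p e, ?_, hψ.comp_blockConfigEquiv e hd hk hcard⟩
  rw [← hψ₁]
  exact (blockConfigEquiv p e).sum_comp fun y => ‖ψ y‖ ^ 2

end Blocks

def mergeFirstTwo (N : ℕ) (j : Fin N) : Option (Fin (N - 2)) :=
  if _ : (j : ℕ) < 2 then none else some ⟨j - 2, by omega⟩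

theorem card_fiber_mergeFirstTwo {N : ℕ} (hN : 2 ≤ N) (o : Option (Fin (N - 2))) :
    Fintype.card {j // mergeFirstTwo N j = o} = o.elim 2 fun _ => 1 := by
  rw [Fintype.card_subtype]
  cases o with
  | none =>
    have hfiber : ∀ j : Fin N, mergeFirstTwo N j = none ↔ (j : ℕ) < 2 := fun j => by
      unfold mergeFirstTwo
      split_ifs <;> simp [*]
    rw [filter_congr fun j _ => hfiber j, Fin.card_filter_val_lt]
    exact min_eq_right hN
  | some i =>
    have hfiber : ∀ j : Fin N, mergeFirstTwo N j = some i ↔ j = ⟨i + 2, by omega⟩ := fun j => by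
      unfold mergeFirstTwo
      split_ifs <;> simp [Fin.ext_iff] <;> omega
    rw [filter_congr fun j _ => hfiber j, filter_eq', if_pos (mem_univ _), card_singleton]
    rfl

theorem card_filter_mergeFirstTwo_mem_le {N : ℕ} (hN : 2 ≤ N)
    (S : Finset (Option (Fin (N - 2)))) :
    (univ.filter fun j => mergeFirstTwo N j ∈ S).card ≤ S.card + 1 :=
  calc (univ.filter fun j => mergeFirstTwo N j ∈ S).card
      = ∑ o ∈ S, (1 + if o = none then 1 else 0) := by
        rw [card_filter_mem_eq_sum_card]
        exact sum_congr rfl fun o _ => by cases o <;> simp [card_fiber_mergeFirstTwo hN]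
    _ = S.card + if none ∈ S then 1 else 0 := by
        rw [sum_add_distrib, sum_ite_eq', card_eq_sum_ones]
    _ ≤ S.card + 1 := by split_ifs <;> omega

/-- If an absolutely maximally entangled state (an `N/2`-uniform state) exists in
`(C^d)^{⊗N}` with `N` even, then an absolutely maximally entangled state (an
`⌊(N-1)/2⌋`-uniform state) exists in `C^{d²} ⊗ (C^d)^{⊗(N-2)}`. -/
theorem AME_merge {d N : ℕ} (hd : 0 < d) (hN : 2 ≤ N) (hEven : Even N)
    (h : ∃ ψ : (Fin N → Fin d) → ℂ,
      (∑ x, ‖ψ x‖ ^ 2 = 1) ∧ IsKUniform (fun _ : Fin N => d) (N / 2) ψ) :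
    ∃ φ : (∀ o, Fin (dimsAME d N o)) → ℂ,
      (∑ x, ‖φ x‖ ^ 2 = 1) ∧ IsKUniform (dimsAME d N) ((N - 1) / 2) φ := by
  obtain ⟨ψ, hψ₁, hψ⟩ := h
  obtain ⟨m, hm⟩ := hEven
  refine exists_isKUniform_of_fibers (p := mergeFirstTwo N) (fun o => ?_) (fun _ => hd)
    (by simpa using N.div_le_self 2) (fun S hS => ?_) hψ₁ hψ
  · rw [prod_const, card_univ, card_fiber_mergeFirstTwo hN]
    cases o <;> simp [dimsAME]
  · have := card_filter_mergeFirstTwo_mem_le hN S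
    omega
end
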